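/- arXiv:1807.02741 — 5 statements merged into one kernel-verified Lean document; each statement's English description precedes it below -/
import Mathlib

section
/- A simplicial complex Δ on [n] is a disjoint union of simplices (equivalently, has pairwise disjoint facets) if and only if (1) every minimal non-face of Δ has exactly two elements, and (2) whenever {i,j} is a minimal non-face, then for every k ∈ [n] that is a vertex of Δ, at least one of {i,k} or {j,k} is a minimal non-face. -/
/-! Condition (2) says that "`{a, b}` is a face" is a transitive relation on the vertices, and
condition (1) that `Δ` is a flag complex. With disjoint facets, two vertices span an edge iff they lie
in a common facet, which gives transitivity; and a minimal non-face with three or more vertices would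
lie in the facet of any one of its vertices. Conversely, two facets sharing a vertex `x` have a union
all of whose pairs are faces (each pair is joined through `x`), so by the flag property the union is
a face and maximality makes the two facets equal. -/

/-- σ is a minimal non-face of Δ. -/
def minNonface (n : ℕ) (Δ : Set (Finset (Fin n))) (σ : Finset (Fin n)) : Prop :=
  σ ∉ Δ ∧ ∀ τ ⊂ σ, τ ∈ Δ

section Facets

variable {α : Type*} {Δ : Set (Finset α)}

def HasDisjointFacets (Δ : Set (Finset α)) : Prop :=
  ∀ ⦃F G⦄, Maximal (· ∈ Δ) F → Maximal (· ∈ Δ) G → F ≠ G → Disjoint F G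

theorem hasDisjointFacets_iff :
    HasDisjointFacets Δ ↔ ∀ F ∈ Δ, ∀ G ∈ Δ, (∀ c ∈ Δ, F ⊆ c → F = c) →
      (∀ c ∈ Δ, G ⊆ c → G = c) → F ≠ G → Disjoint F G := by
  refine ⟨fun h F hF G hG hFm hGm => h (maximal_iff.2 ⟨hF, hFm⟩) (maximal_iff.2 ⟨hG, hGm⟩),
    fun h F G hF hG => ?_⟩
  exact h F hF.prop G hG.prop (maximal_iff.1 hF).2 (maximal_iff.1 hG).2

variable [DecidableEq α]

theorem hasDisjointFacets_of_flag_of_pair_mem_trans (hΔ : ∀ σ ∈ Δ, ∀ τ ⊆ σ, τ ∈ Δ)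
    (hflag : ∀ σ : Finset α, (∀ a ∈ σ, ∀ b ∈ σ, ({a, b} : Finset α) ∈ Δ) → σ ∈ Δ)
    (htrans : ∀ a b x : α, {a, x} ∈ Δ → {b, x} ∈ Δ → ({a, b} : Finset α) ∈ Δ) :
    HasDisjointFacets Δ := by
  intro F G hF hG hFG
  by_contra hdisj
  obtain ⟨x, hxF, hxG⟩ := Finset.not_disjoint_iff.1 hdisj
  have hx : ∀ a ∈ F ∪ G, ({a, x} : Finset α) ∈ Δ := by
    intro a ha
    rcases Finset.mem_union.1 ha with ha | ha
    · exact hΔ F hF.prop _ (Finset.insert_subset_iff.2 ⟨ha, by simpa using hxF⟩)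
    · exact hΔ G hG.prop _ (Finset.insert_subset_iff.2 ⟨ha, by simpa using hxG⟩)
  have hunion : F ∪ G ∈ Δ := hflag _ fun a ha b hb => htrans a b x (hx a ha) (hx b hb)
  exact hFG (((maximal_iff.1 hF).2 hunion Finset.subset_union_left).trans
    ((maximal_iff.1 hG).2 hunion Finset.subset_union_right).symm)

variable [Finite α]

theorem HasDisjointFacets.mem_of_pair_mem (h : HasDisjointFacets Δ) {F : Finset α} {i x : α}
    (hF : Maximal (· ∈ Δ) F) (hi : i ∈ F) (hix : {i, x} ∈ Δ) : x ∈ F := by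
  obtain ⟨H, hixH, hH⟩ := Finite.exists_le_maximal (p := (· ∈ Δ)) hix
  have hFH : F = H :=
    by_contra fun hFH => Finset.disjoint_left.1 (h hF hH hFH) hi (hixH (by simp))
  exact hFH ▸ hixH (by simp)

theorem HasDisjointFacets.pair_mem_trans (hΔ : ∀ σ ∈ Δ, ∀ τ ⊆ σ, τ ∈ Δ)
    (h : HasDisjointFacets Δ) {i j k : α} (hik : {i, k} ∈ Δ) (hjk : {j, k} ∈ Δ) : ({i, j} : Finset α) ∈ Δ := by
  obtain ⟨F, hikF, hF⟩ := Finite.exists_le_maximal (p := (· ∈ Δ)) hik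
  have hj : j ∈ F := h.mem_of_pair_mem hF (hikF (by simp)) (Finset.pair_comm j k ▸ hjk)
  exact hΔ F hF.prop _ (Finset.insert_subset_iff.2 ⟨hikF (by simp), by simpa using hj⟩)

end Facets

section MinNonface

variable {n : ℕ} {Δ : Set (Finset (Fin n))}

theorem minNonface_iff_minimal {σ : Finset (Fin n)} : minNonface n Δ σ ↔ Minimal (· ∉ Δ) σ := by
  simp only [minNonface, minimal_iff_forall_lt, not_not]

theorem exists_minNonface_subset {σ : Finset (Fin n)} (hσ : σ ∉ Δ) :
    ∃ τ ⊆ σ, minNonface n Δ τ := by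
  obtain ⟨τ, hτσ, hτ⟩ := Finite.exists_le_minimal (p := (· ∉ Δ)) hσ
  exact ⟨τ, hτσ, minNonface_iff_minimal.2 hτ⟩

theorem mem_of_forall_pair_mem (h : ∀ σ, minNonface n Δ σ → σ.card = 2) {σ : Finset (Fin n)}
    (hσ : ∀ a ∈ σ, ∀ b ∈ σ, ({a, b} : Finset (Fin n)) ∈ Δ) : σ ∈ Δ := by
  by_contra hσΔ
  obtain ⟨τ, hτσ, hτ⟩ := exists_minNonface_subset hσΔ
  obtain ⟨a, b, -, rfl⟩ := Finset.card_eq_two.1 (h τ hτ)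
  exact hτ.1 (hσ a (hτσ (by simp)) b (hτσ (by simp)))

variable (hvert : ∀ i : Fin n, ({i} : Finset (Fin n)) ∈ Δ) (hne : (∅ : Finset (Fin n)) ∈ Δ)
include hvert hne

theorem mem_of_card_le_one {σ : Finset (Fin n)} (hσ : σ.card ≤ 1) : σ ∈ Δ := by
  rcases Nat.le_one_iff_eq_zero_or_eq_one.1 hσ with h | h
  · rwa [Finset.card_eq_zero.1 h]
  · obtain ⟨a, rfl⟩ := Finset.card_eq_one.1 h
    exact hvert a

theorem two_le_card_of_minNonface {σ : Finset (Fin n)} (hσ : minNonface n Δ σ) : 2 ≤ σ.card := by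
  by_contra! h
  exact hσ.1 (mem_of_card_le_one hvert hne (by omega))

theorem minNonface_pair {a b : Fin n} (hab : {a, b} ∉ Δ) : minNonface n Δ {a, b} :=
  ⟨hab, fun τ hτ => mem_of_card_le_one hvert hne
    (by have := Finset.card_lt_card hτ; have := Finset.card_le_two (a := a) (b := b); omega)⟩

theorem pair_mem_trans_of_minNonface_pair
    (h : ∀ i j : Fin n, minNonface n Δ {i, j} → ∀ k : Fin n,
      minNonface n Δ {i, k} ∨ minNonface n Δ {j, k})
    (a b x : Fin n) (hax : {a, x} ∈ Δ) (hbx : {b, x} ∈ Δ) : ({a, b} : Finset (Fin n)) ∈ Δ := by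
  by_contra hab
  rcases h a b (minNonface_pair hvert hne hab) x with hx | hx
  exacts [hx.1 hax, hx.1 hbx]

theorem HasDisjointFacets.minNonface_pair_or (hΔ : ∀ σ ∈ Δ, ∀ τ ⊆ σ, τ ∈ Δ)
    (h : HasDisjointFacets Δ) {i j : Fin n} (hij : minNonface n Δ {i, j}) (k : Fin n) :
    minNonface n Δ {i, k} ∨ minNonface n Δ {j, k} := by
  by_contra! hk
  have hik : {i, k} ∈ Δ := by_contra fun hik => hk.1 (minNonface_pair hvert hne hik)
  have hjk : {j, k} ∈ Δ := by_contra fun hjk => hk.2 (minNonface_pair hvert hne hjk)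
  exact hij.1 (h.pair_mem_trans hΔ hik hjk)

theorem HasDisjointFacets.card_minNonface (hΔ : ∀ σ ∈ Δ, ∀ τ ⊆ σ, τ ∈ Δ)
    (h : HasDisjointFacets Δ) {σ : Finset (Fin n)} (hσ : minNonface n Δ σ) : σ.card = 2 := by
  refine le_antisymm ?_ (two_le_card_of_minNonface hvert hne hσ)
  by_contra! hcard
  obtain ⟨i, hi⟩ := Finset.card_pos.1 (by omega : 0 < σ.card)
  obtain ⟨F, hiF, hF⟩ := Finite.exists_le_maximal (p := (· ∈ Δ)) (hvert i)
  have hpair : ∀ x ∈ σ, {i, x} ⊂ σ := fun x hx =>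
    (Finset.insert_subset_iff.2 ⟨hi, by simpa using hx⟩).ssubset_of_ne fun he => by
      have := Finset.card_le_two (a := i) (b := x); rw [he] at this; omega
  have hσF : σ ⊆ F := fun x hx => h.mem_of_pair_mem hF (hiF (by simp)) (hσ.2 _ (hpair x hx))
  exact hσ.1 (hΔ F hF.prop σ hσF)

end MinNonface

/-- A simplicial complex on [n] (all singletons faces) has pairwise disjoint
facets iff (1) every minimal non-face has exactly two elements, and (2) whenever
{i,j} is a minimal non-face, then for every k at least one of {i,k}, {j,k}
is a minimal non-face. -/
theorem stmt8 (n : ℕ) (Δ : Set (Finset (Fin n)))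
    (hΔ : ∀ σ ∈ Δ, ∀ τ ⊆ σ, τ ∈ Δ)
    (hvert : ∀ i : Fin n, ({i} : Finset (Fin n)) ∈ Δ)
    (hne : (∅ : Finset (Fin n)) ∈ Δ) :
    (∀ F ∈ Δ, ∀ G ∈ Δ, (∀ c ∈ Δ, F ⊆ c → F = c) → (∀ c ∈ Δ, G ⊆ c → G = c) →
        F ≠ G → Disjoint F G) ↔
    ((∀ σ, minNonface n Δ σ → σ.card = 2) ∧
      (∀ i j : Fin n, minNonface n Δ {i, j} → ∀ k : Fin n,
        minNonface n Δ {i, k} ∨ minNonface n Δ {j, k})) := by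
  rw [← hasDisjointFacets_iff]
  constructor
  · intro h
    exact ⟨fun σ => h.card_minNonface hvert hne hΔ, fun i j => h.minNonface_pair_or hvert hne hΔ⟩
  · rintro ⟨hcard, hpair⟩
    exact hasDisjointFacets_of_flag_of_pair_mem_trans hΔ (fun σ => mem_of_forall_pair_mem hcard)
      (pair_mem_trans_of_minNonface_pair hvert hne hpair)
end

section
/- Let U₁,…,U_n be open subsets of a topological space, σ ⊆ [n], τ disjoint from σ, with U_σ ⊆ ∪_{i∈τ} U_i and U_σ ∩ U_i ≠ ∅ for all i ∈ τ. Define the graph G on vertex set τ with edges (i,j) whenever U_σ ∩ U_i ∩ U_j ≠ ∅. If G is disconnected, then U_σ is disconnected. -/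
/-!
If `U_σ` were preconnected, the union of the `U_i` over one connected component of `G` and the
union over the remaining vertices would be two open sets covering `U_σ` and both meeting it; so
they would share a point of `U_σ`, lying in some `U_a ∩ U_b` with `a` inside and `b` outside the
component, which makes `a` and `b` adjacent.
-/

open Set

namespace SimpleGraph

variable {X ι : Type*}

def overlapGraph (S : Set X) (U : ι → Set X) : SimpleGraph ι :=
  fromRel fun i j => (S ∩ U i ∩ U j).Nonempty

theorem overlapGraph_reachable_of_mem {S : Set X} {U : ι → Set X} {i a b : ι} {x : X}
    (hx : x ∈ S) (ha : x ∈ U a) (hb : x ∈ U b) (hia : (overlapGraph S U).Reachable i a) :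
    (overlapGraph S U).Reachable i b := by
  rcases eq_or_ne a b with rfl | hab
  · exact hia
  · have hadj : (overlapGraph S U).Adj a b :=
      (fromRel_adj _ a b).mpr ⟨hab, Or.inl ⟨x, ⟨hx, ha⟩, hb⟩⟩
    exact hia.trans hadj.reachable

end SimpleGraph

open SimpleGraph

theorem IsPreconnected.overlapGraph_reachable {X ι : Type*} [TopologicalSpace X] {S : Set X}
    (hS : IsPreconnected S) {U : ι → Set X} (hU : ∀ i, IsOpen (U i)) (hcov : S ⊆ ⋃ i, U i)
    {i j : ι} (hi : (S ∩ U i).Nonempty) (hj : (S ∩ U j).Nonempty) :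
    (overlapGraph S U).Reachable i j := by
  set A : Set ι := {k | (overlapGraph S U).Reachable i k}
  have hcovA : S ⊆ (⋃ k ∈ A, U k) ∪ ⋃ k ∈ Aᶜ, U k := by
    intro x hx
    obtain ⟨k, hk⟩ := mem_iUnion.mp (hcov hx)
    by_cases hkA : k ∈ A
    · exact Or.inl (mem_biUnion hkA hk)
    · exact Or.inr (mem_biUnion hkA hk)
  by_contra hij
  have hA : (S ∩ ⋃ k ∈ A, U k).Nonempty := hi.mono <| inter_subset_inter_right _ <|
    subset_biUnion_of_mem (u := U) (show i ∈ A from Reachable.refl i)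
  have hAc : (S ∩ ⋃ k ∈ Aᶜ, U k).Nonempty := hj.mono <| inter_subset_inter_right _ <|
    subset_biUnion_of_mem (u := U) (show j ∈ Aᶜ from hij)
  obtain ⟨x, hx, hxA, hxAc⟩ := hS _ _ (isOpen_biUnion fun k _ => hU k)
    (isOpen_biUnion fun k _ => hU k) hcovA hA hAc
  obtain ⟨a, ha, hxa⟩ := mem_iUnion₂.mp hxA
  obtain ⟨b, hb, hxb⟩ := mem_iUnion₂.mp hxAc
  exact hb (overlapGraph_reachable_of_mem hx hxa hxb ha)

theorem stmt11_general {X : Type*} [TopologicalSpace X] (n : ℕ) (U : Fin n → Set X)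
    (hopen : ∀ k, IsOpen (U k)) (σ τ : Finset (Fin n))
    (hcov : (⋂ k ∈ σ, U k) ⊆ ⋃ i ∈ τ, U i)
    (hne : ∀ i ∈ τ, ((⋂ k ∈ σ, U k) ∩ U i).Nonempty)
    (hG : ¬ (SimpleGraph.fromRel
        (fun i j : {i // i ∈ τ} =>
          ((⋂ k ∈ σ, U k) ∩ U i.1 ∩ U j.1).Nonempty)).Preconnected) :
    ¬ IsPreconnected (⋂ k ∈ σ, U k) := by
  intro hpre
  have hcovτ : (⋂ k ∈ σ, U k) ⊆ ⋃ i : τ, U i := by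
    simpa only [iUnion_subtype] using hcov
  exact hG fun i j => hpre.overlapGraph_reachable (U := fun k : τ => U k) (fun k => hopen k)
    hcovτ (hne i i.2) (hne j j.2)

/-- If the graph G on τ with edges (i,j) whenever U_σ ∩ U_i ∩ U_j ≠ ∅ is
disconnected, and U_σ is covered by the U_i (i ∈ τ), each meeting U_σ, then
U_σ is disconnected. -/
theorem stmt11 {X : Type*} [TopologicalSpace X] (n : ℕ) (U : Fin n → Set X)
    (hopen : ∀ k, IsOpen (U k)) (σ τ : Finset (Fin n)) (hdisj : Disjoint σ τ)
    (hcov : (⋂ k ∈ σ, U k) ⊆ ⋃ i ∈ τ, U i)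
    (hne : ∀ i ∈ τ, ((⋂ k ∈ σ, U k) ∩ U i).Nonempty)
    (hG : ¬ (SimpleGraph.fromRel
        (fun i j : {i // i ∈ τ} =>
          ((⋂ k ∈ σ, U k) ∩ U i.1 ∩ U j.1).Nonempty)).Preconnected) :
    ¬ IsPreconnected (⋂ k ∈ σ, U k) :=
  stmt11_general n U hopen σ τ hcov hne hG
end

section
/- Let C be a code on [n] such that for every receptive field relationship it suffices to check singletons: precisely, suppose for every σ ∈ Δ(C) \ C there exists i ∉ σ with σ ∪ {i} ∈ Δ(C) and such that every codeword containing σ also contains i. Then C is intersection-complete: for all ω₁, ω₂ ∈ C, ω₁ ∩ ω₂ ∈ C. -/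
/-- The simplicial complex Δ(C) of a code C. -/
def codeComplex (n : ℕ) (C : Set (Finset (Fin n))) : Set (Finset (Fin n)) :=
  {σ | ∃ c ∈ C, σ ⊆ c}

theorem stmt12_general (n : ℕ) (C : Set (Finset (Fin n)))
    (h : ∀ σ ∈ codeComplex n C, σ ∉ C → ∃ i ∉ σ,
        σ ∪ {i} ∈ codeComplex n C ∧ ∀ c ∈ C, σ ⊆ c → i ∈ c) :
    ∀ ω₁ ∈ C, ∀ ω₂ ∈ C, ω₁ ∩ ω₂ ∈ C := by
  intro ω₁ h₁ ω₂ h₂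
  by_contra hσ
  -- The neuron covering ω₁ ∩ ω₂ would lie in both ω₁ and ω₂, hence in ω₁ ∩ ω₂ itself.
  obtain ⟨i, hi, -, hcov⟩ := h (ω₁ ∩ ω₂) ⟨ω₁, h₁, Finset.inter_subset_left⟩ hσ
  exact hi (Finset.mem_inter.mpr
    ⟨hcov ω₁ h₁ Finset.inter_subset_left, hcov ω₂ h₂ Finset.inter_subset_right⟩)

/-- If every missing face σ ∈ Δ(C) \ C is covered by a single neuron i
(i ∉ σ, σ ∪ {i} ∈ Δ(C), and every codeword containing σ contains i), then C is
intersection-complete. -/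
theorem stmt12 (n : ℕ) (C : Set (Finset (Fin n)))
    (h0 : (∅ : Finset (Fin n)) ∈ C)
    (h : ∀ σ ∈ codeComplex n C, σ ∉ C → ∃ i ∉ σ,
        σ ∪ {i} ∈ codeComplex n C ∧ ∀ c ∈ C, σ ⊆ c → i ∈ c) :
    ∀ ω₁ ∈ C, ∀ ω₂ ∈ C, ω₁ ∩ ω₂ ∈ C :=
  stmt12_general n C h
end

section
/- Conversely, if C is an intersection-complete code, then for every σ ∈ Δ(C) \ C there exists i ∉ σ such that every codeword of C containing σ also contains i. -/
theorem InfClosed.exists_isLeast_of_finite {β : Type*} [SemilatticeInf β] {S : Set β}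
    (hS : InfClosed S) (hfin : S.Finite) (hne : S.Nonempty) : ∃ m, IsLeast S m := by
  have hT : hfin.toFinset.Nonempty := hfin.toFinset_nonempty.mpr hne
  refine ⟨hfin.toFinset.inf' hT id, hS.finsetInf'_mem hT fun c hc ↦ hfin.mem_toFinset.mp hc,
    fun c hc ↦ Finset.inf'_le id (hfin.mem_toFinset.mpr hc)⟩

theorem InfClosed.exists_isLeast_superset {α : Type*} [Finite α] [DecidableEq α]
    {C : Set (Finset α)} (hC : InfClosed C) {σ : Finset α} (hσ : ∃ c ∈ C, σ ⊆ c) :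
    ∃ m, IsLeast {c | c ∈ C ∧ σ ⊆ c} m :=
  InfClosed.exists_isLeast_of_finite
    (fun _ ha _ hb ↦ ⟨hC ha.1 hb.1, Finset.subset_inter ha.2 hb.2⟩) (Set.toFinite _) hσ

theorem stmt13_general (n : ℕ) (C : Set (Finset (Fin n)))
    (hC : ∀ ω₁ ∈ C, ∀ ω₂ ∈ C, ω₁ ∩ ω₂ ∈ C)
    (σ : Finset (Fin n)) (hσ : σ ∈ codeComplex n C) (hσC : σ ∉ C) :
    ∃ i ∉ σ, ∀ c ∈ C, σ ⊆ c → i ∈ c := by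
  obtain ⟨m, ⟨hmC, hσm⟩, hm_le⟩ :=
    InfClosed.exists_isLeast_superset (fun a ha b hb ↦ hC a ha b hb) hσ
  have hσ_ssubset : σ ⊂ m := hσm.ssubset_of_ne fun h ↦ hσC (h ▸ hmC)
  obtain ⟨i, him, hiσ⟩ := Finset.exists_of_ssubset hσ_ssubset
  exact ⟨i, hiσ, fun c hcC hσc ↦ hm_le ⟨hcC, hσc⟩ him⟩

/-- If C is intersection-complete, then for every σ ∈ Δ(C) \ C there is i ∉ σ
such that every codeword containing σ also contains i. -/
theorem stmt13 (n : ℕ) (C : Set (Finset (Fin n)))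
    (h0 : (∅ : Finset (Fin n)) ∈ C)
    (hC : ∀ ω₁ ∈ C, ∀ ω₂ ∈ C, ω₁ ∩ ω₂ ∈ C)
    (σ : Finset (Fin n)) (hσ : σ ∈ codeComplex n C) (hσC : σ ∉ C) :
    ∃ i ∉ σ, ∀ c ∈ C, σ ⊆ c → i ∈ c :=
  stmt13_general n C hC σ hσ hσC
end

section
/- Let C = C(𝒰) be the code of a cover by sets U₁,…,U_n. For σ, τ ⊆ [n] disjoint, the containment U_σ ⊆ ∪_{i∈τ} U_i holds if and only if every codeword c ∈ C with σ ⊆ c satisfies c ∩ τ ≠ ∅. -/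
open scoped Classical in
/-- The code of the cover U₁, …, U_n. -/
noncomputable def coverCode (n : ℕ) {X : Type*} (U : Fin n → Set X) :
    Set (Finset (Fin n)) :=
  {σ | ((⋂ i ∈ σ, U i) \ ⋃ j ∈ σᶜ, U j).Nonempty}

section PointCode

variable {ι X : Type*} [Fintype ι] (U : ι → Set X)

open scoped Classical in
noncomputable def pointCode (x : X) : Finset ι := {i | x ∈ U i}

variable {U}

@[simp]
theorem mem_pointCode {x : X} {i : ι} : i ∈ pointCode U x ↔ x ∈ U i := by
  simp [pointCode]

theorem subset_pointCode_iff {x : X} {σ : Finset ι} :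
    σ ⊆ pointCode U x ↔ x ∈ ⋂ i ∈ σ, U i := by
  simp [Finset.subset_iff]

theorem pointCode_inter_nonempty_iff [DecidableEq ι] {x : X} {τ : Finset ι} :
    (pointCode U x ∩ τ).Nonempty ↔ x ∈ ⋃ i ∈ τ, U i := by
  simp [Finset.Nonempty, and_comm]

end PointCode

theorem mem_coverCode_iff {n : ℕ} {X : Type*} {U : Fin n → Set X} {c : Finset (Fin n)} :
    c ∈ coverCode n U ↔ ∃ x, pointCode U x = c := by
  simp only [coverCode, Set.Nonempty, Set.mem_ofPred_eq, Set.mem_sdiff, Set.mem_iInter,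
    Set.mem_iUnion, Finset.mem_compl, not_exists, Finset.ext_iff, mem_pointCode]
  refine exists_congr fun x => ⟨fun ⟨hin, hout⟩ i => ?_, fun h => ⟨?_, ?_⟩⟩
  · exact ⟨fun hx => by_contra fun hi => hout i hi hx, hin i⟩
  · exact fun i hi => (h i).mpr hi
  · exact fun j hj hx => hj ((h j).mp hx)

theorem stmt17_general (n : ℕ) {X : Type*} (U : Fin n → Set X)
    (σ τ : Finset (Fin n)) :
    ((⋂ i ∈ σ, U i) ⊆ ⋃ i ∈ τ, U i) ↔
      ∀ c ∈ coverCode n U, σ ⊆ c → (c ∩ τ).Nonempty := by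
  simp only [mem_coverCode_iff, forall_exists_index, forall_apply_eq_imp_iff,
    subset_pointCode_iff, pointCode_inter_nonempty_iff, Set.subset_def]

/-- Type 2 receptive-field correspondence: U_σ ⊆ ∪_{i∈τ} U_i iff every codeword
containing σ meets τ. -/
theorem stmt17 (n : ℕ) {X : Type*} (U : Fin n → Set X)
    (σ τ : Finset (Fin n)) (hdisj : Disjoint σ τ)
    (hproper : (⋃ i, U i) ≠ Set.univ) :
    ((⋂ i ∈ σ, U i) ⊆ ⋃ i ∈ τ, U i) ↔
      ∀ c ∈ coverCode n U, σ ⊆ c → (c ∩ τ).Nonempty :=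
  stmt17_general n U σ τ
end
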